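/- arXiv:2506.04896 — 8 statements merged into one kernel-verified Lean document; each statement's English description precedes it below -/
import Mathlib

section
/- For any bounded sequence (b_t) of real numbers, the Cesàro lower limit is at most the Abel lower limit, the Abel lower limit is at most the Abel upper limit, and the Abel upper limit is at most the Cesàro upper limit: liminf_{T→∞} (1/T)∑_{t=0}^{T-1} b_t ≤ liminf_{α↑1} (1−α)∑_{t=0}^∞ α^t b_t ≤ limsup_{α↑1} (1−α)∑_{t=0}^∞ α^t b_t ≤ limsup_{T→∞} (1/T)∑_{t=0}^{T-1} b_t. -/
/-!
A Cauchy product with the geometric series writes the Abel mean as a weighted average of the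
Cesàro means: `(1 - α) ∑ αᵗ bₜ = (1 - α)² ∑ αⁿ Sₙ₊₁`, where `Sₙ` is the `n`-th partial sum and
`(1 - α)² ∑ (n + 1) αⁿ = 1`. If `Sₙ ≥ c n` for all large `n`, then `Sₙ ≥ c n - K` for all `n`, and
the average is at least `c - K (1 - α)`, which tends to `c` as `α ↑ 1`. Upper bounds are lower
bounds for `-b`.
-/

open Filter Topology Finset

noncomputable def cesaroMean (b : ℕ → ℝ) (n : ℕ) : ℝ := (∑ t ∈ range n, b t) / n

noncomputable def abelMean (b : ℕ → ℝ) (α : ℝ) : ℝ := (1 - α) * ∑' t, α ^ t * b t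

lemma abelMean_neg (b : ℕ → ℝ) (α : ℝ) : abelMean (-b) α = -abelMean b α := by
  simp [abelMean, tsum_neg]

lemma exists_forall_sub_le_of_eventually_le {u v : ℕ → ℝ} (h : ∀ᶠ n in atTop, u n ≤ v n) :
    ∃ K, ∀ n, u n - K ≤ v n := by
  obtain ⟨K, hK⟩ := (isBoundedUnder_of_eventually_le (a := 0)
    (h.mono fun n hn => sub_nonpos.2 hn)).bddAbove_range
  exact ⟨K, fun n => by linarith [hK ⟨n, rfl⟩]⟩

instance : (𝓝[Set.Ico (0 : ℝ) 1] 1).NeBot := right_nhdsWithin_Ico_neBot zero_lt_one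

section

variable {b : ℕ → ℝ} {M : ℝ}

lemma abs_sum_range_le (hb : ∀ t, |b t| ≤ M) (n : ℕ) : |∑ t ∈ range n, b t| ≤ M * n := by
  simpa [mul_comm] using
    (abs_sum_le_sum_abs b (range n)).trans (sum_le_card_nsmul _ _ _ fun t _ => hb t)

lemma abs_cesaroMean_le (hb : ∀ t, |b t| ≤ M) (n : ℕ) : |cesaroMean b n| ≤ M := by
  rcases n.eq_zero_or_pos with rfl | hn
  · simpa [cesaroMean] using (abs_nonneg _).trans (hb 0)
  · rw [cesaroMean, abs_div, Nat.abs_cast, div_le_iff₀ (by positivity)]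
    exact abs_sum_range_le hb n

lemma summable_norm_pow_mul (hb : ∀ t, |b t| ≤ M) {α : ℝ} (hα : |α| < 1) :
    Summable fun t => ‖α ^ t * b t‖ := by
  refine Summable.of_nonneg_of_le (fun t => norm_nonneg _) (fun t => ?_)
    ((summable_geometric_of_lt_one (abs_nonneg α) hα).mul_right M)
  rw [norm_mul, norm_pow, Real.norm_eq_abs, Real.norm_eq_abs]
  exact mul_le_mul_of_nonneg_left (hb t) (by positivity)

lemma hasSum_pow_mul_sum_range_succ (hb : ∀ t, |b t| ≤ M) {α : ℝ} (hα : |α| < 1) :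
    HasSum (fun n => α ^ n * ∑ t ∈ range (n + 1), b t) ((∑' t, α ^ t * b t) * (1 - α)⁻¹) := by
  have hgeom : Summable fun n => ‖α ^ n‖ := by
    simpa using summable_geometric_of_lt_one (abs_nonneg α) hα
  rw [← tsum_geometric_of_abs_lt_one hα]
  refine (hasSum_sum_range_mul_of_summable_norm (summable_norm_pow_mul hb hα) hgeom).congr_fun
    fun n => ?_
  rw [mul_sum]
  refine sum_congr rfl fun t ht => ?_
  rw [← pow_mul_pow_sub α (mem_range_succ_iff.1 ht)]
  ring

lemma hasSum_pow_mul_succ {α : ℝ} (hα : |α| < 1) :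
    HasSum (fun n : ℕ => α ^ n * (n + 1)) ((1 - α)⁻¹ * (1 - α)⁻¹) := by
  simpa [tsum_geometric_of_abs_lt_one hα] using
    hasSum_pow_mul_sum_range_succ (b := fun _ => 1) (M := 1) (by simp) hα

lemma sub_mul_le_abelMean (hb : ∀ t, |b t| ≤ M) {c K α : ℝ}
    (hS : ∀ n : ℕ, c * n - K ≤ ∑ t ∈ range n, b t) (hα : α ∈ Set.Ico 0 1) :
    c - K * (1 - α) ≤ abelMean b α := by
  obtain ⟨hα0, hα1⟩ := hα
  have hα' : |α| < 1 := by rwa [abs_of_nonneg hα0]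
  have hlower : HasSum (fun n : ℕ => α ^ n * (c * (n + 1) - K))
      (c * ((1 - α)⁻¹ * (1 - α)⁻¹) - K * (1 - α)⁻¹) := by
    refine (((hasSum_pow_mul_succ hα').mul_left c).sub
      ((hasSum_geometric_of_abs_lt_one hα').mul_left K)).congr_fun fun n => ?_
    ring
  have hle := hasSum_le (fun n => mul_le_mul_of_nonneg_left (by exact_mod_cast hS (n + 1))
    (pow_nonneg hα0 n)) hlower (hasSum_pow_mul_sum_range_succ hb hα')
  have h1α : 0 < 1 - α := by linarith
  calc c - K * (1 - α) = (1 - α) ^ 2 * (c * ((1 - α)⁻¹ * (1 - α)⁻¹) - K * (1 - α)⁻¹) := by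
        field_simp
    _ ≤ (1 - α) ^ 2 * ((∑' t, α ^ t * b t) * (1 - α)⁻¹) := by gcongr
    _ = abelMean b α := by rw [abelMean]; field_simp

lemma abelMean_le_add_mul (hb : ∀ t, |b t| ≤ M) {c K α : ℝ}
    (hS : ∀ n : ℕ, ∑ t ∈ range n, b t ≤ c * n + K) (hα : α ∈ Set.Ico 0 1) :
    abelMean b α ≤ c + K * (1 - α) := by
  have := sub_mul_le_abelMean (b := -b) (c := -c) (K := K) (by simpa using hb)
    (fun n => by simp only [Pi.neg_apply, sum_neg_distrib]; linarith [hS n]) hα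
  rw [abelMean_neg] at this
  linarith

lemma abs_abelMean_le (hb : ∀ t, |b t| ≤ M) {α : ℝ} (hα : α ∈ Set.Ico 0 1) :
    |abelMean b α| ≤ M := by
  have hS n := abs_le.1 (abs_sum_range_le hb n)
  have hlower := sub_mul_le_abelMean hb (c := -M) (K := 0) (fun n => by linarith [hS n]) hα
  have hupper := abelMean_le_add_mul hb (c := M) (K := 0) (fun n => by linarith [hS n]) hα
  exact abs_le.2 ⟨by linarith, by linarith⟩

lemma isBoundedUnder_abs_cesaroMean (hb : ∀ t, |b t| ≤ M) :
    IsBoundedUnder (· ≤ ·) atTop fun n => |cesaroMean b n| :=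
  isBoundedUnder_of_eventually_le (Eventually.of_forall (abs_cesaroMean_le hb))

lemma isBoundedUnder_abs_abelMean (hb : ∀ t, |b t| ≤ M) :
    IsBoundedUnder (· ≤ ·) (𝓝[Set.Ico 0 1] 1) fun α => |abelMean b α| :=
  isBoundedUnder_of_eventually_le (eventually_nhdsWithin_of_forall fun _ => abs_abelMean_le hb)

lemma le_liminf_abelMean (hb : ∀ t, |b t| ≤ M) {c : ℝ}
    (h : ∀ᶠ n : ℕ in atTop, c * n ≤ ∑ t ∈ range n, b t) :
    c ≤ liminf (abelMean b) (𝓝[Set.Ico 0 1] 1) := by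
  obtain ⟨K, hK⟩ := exists_forall_sub_le_of_eventually_le h
  have hlim : Tendsto (fun α : ℝ => c - K * (1 - α)) (𝓝[Set.Ico 0 1] 1) (𝓝 c) :=
    tendsto_nhdsWithin_of_tendsto_nhds <| (by fun_prop : Continuous _).tendsto' 1 c (by ring)
  rw [← hlim.liminf_eq]
  exact liminf_le_liminf (eventually_nhdsWithin_of_forall fun α => sub_mul_le_abelMean hb hK)
    hlim.isBoundedUnder_ge
    (isBoundedUnder_le_abs.1 (isBoundedUnder_abs_abelMean hb)).1.isCoboundedUnder_ge

lemma limsup_abelMean_le (hb : ∀ t, |b t| ≤ M) {c : ℝ}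
    (h : ∀ᶠ n : ℕ in atTop, ∑ t ∈ range n, b t ≤ c * n) :
    limsup (abelMean b) (𝓝[Set.Ico 0 1] 1) ≤ c := by
  obtain ⟨K, hK⟩ := exists_forall_sub_le_of_eventually_le h
  have hlim : Tendsto (fun α : ℝ => c + K * (1 - α)) (𝓝[Set.Ico 0 1] 1) (𝓝 c) :=
    tendsto_nhdsWithin_of_tendsto_nhds <| (by fun_prop : Continuous _).tendsto' 1 c (by ring)
  rw [← hlim.limsup_eq]
  exact limsup_le_limsup (eventually_nhdsWithin_of_forall fun α =>
      abelMean_le_add_mul hb fun n => by linarith [hK n])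
    (isBoundedUnder_le_abs.1 (isBoundedUnder_abs_abelMean hb)).2.isCoboundedUnder_le
    hlim.isBoundedUnder_le

lemma liminf_cesaroMean_le_liminf_abelMean (hb : ∀ t, |b t| ≤ M) :
    liminf (cesaroMean b) atTop ≤ liminf (abelMean b) (𝓝[Set.Ico 0 1] 1) := by
  refine le_of_forall_lt_imp_le_of_dense fun c hc => le_liminf_abelMean hb ?_
  filter_upwards [eventually_lt_of_lt_liminf hc
    (isBoundedUnder_le_abs.1 (isBoundedUnder_abs_cesaroMean hb)).2, eventually_gt_atTop 0]
    with n hn hn0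
  exact ((lt_div_iff₀ (by positivity)).1 hn).le

lemma limsup_abelMean_le_limsup_cesaroMean (hb : ∀ t, |b t| ≤ M) :
    limsup (abelMean b) (𝓝[Set.Ico 0 1] 1) ≤ limsup (cesaroMean b) atTop := by
  refine le_of_forall_gt_imp_ge_of_dense fun c hc => limsup_abelMean_le hb ?_
  filter_upwards [eventually_lt_of_limsup_lt hc
    (isBoundedUnder_le_abs.1 (isBoundedUnder_abs_cesaroMean hb)).1, eventually_gt_atTop 0]
    with n hn hn0
  exact ((div_lt_iff₀ (by positivity)).1 hn).le

end

/-- Tauberian inequalities: for a bounded real sequence, the Cesàro lower limit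
is at most the Abel lower limit, which is at most the Abel upper limit, which is
at most the Cesàro upper limit. -/
theorem cesaro_abel_liminf_limsup
    (b : ℕ → ℝ) (M : ℝ) (hb : ∀ t, |b t| ≤ M) :
    liminf (fun T : ℕ => (∑ t ∈ Finset.range T, b t) / T) atTop ≤
      liminf (fun α : ℝ => (1 - α) * ∑' t : ℕ, α ^ t * b t)
        (nhdsWithin 1 (Set.Ico (0 : ℝ) 1)) ∧
    liminf (fun α : ℝ => (1 - α) * ∑' t : ℕ, α ^ t * b t)
        (nhdsWithin 1 (Set.Ico (0 : ℝ) 1)) ≤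
      limsup (fun α : ℝ => (1 - α) * ∑' t : ℕ, α ^ t * b t)
        (nhdsWithin 1 (Set.Ico (0 : ℝ) 1)) ∧
    limsup (fun α : ℝ => (1 - α) * ∑' t : ℕ, α ^ t * b t)
        (nhdsWithin 1 (Set.Ico (0 : ℝ) 1)) ≤
      limsup (fun T : ℕ => (∑ t ∈ Finset.range T, b t) / T) atTop := by
  obtain ⟨habel_le, habel_ge⟩ := isBoundedUnder_le_abs.1 (isBoundedUnder_abs_abelMean hb)
  exact ⟨liminf_cesaroMean_le_liminf_abelMean hb, liminf_le_limsup habel_le habel_ge,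
    limsup_abelMean_le_limsup_cesaroMean hb⟩
end

section
/- (Berge maximum theorem, minimization form) Let U and V be metric spaces, F : U → 2^V an upper semicontinuous set-valued map with nonempty compact values, and f : U × V → ℝ lower semicontinuous. Then the value function f*(u) := min_{v ∈ F(u)} f(u,v) is well-defined and lower semicontinuous on U, and the solution multifunction F*(u) := {v ∈ F(u) : f(u,v) = f*(u)} has nonempty compact values. -/
/-!
Fix `u` and a level `c` below the optimal value `f*(u)`. By lower semicontinuity, `f > c` on an
open subset of `U × V` containing the compact slice `{u} × F(u)`; the tube lemma shrinks it to a
box `A × B`, and upper semicontinuity of `F` gives `F(u') ⊆ B` for `u'` near `u`. Since the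
minimum over the compact set `F(u')` is attained, `f*(u') > c` for those `u'`.
-/

open Set Filter Topology

section CompactMinimization

variable {Y β : Type*} [TopologicalSpace Y] [ConditionallyCompleteLinearOrder β]
  {K : Set Y} {g : Y → β}

theorem IsCompact.exists_isMinOn_csInf_image_eq (hK : IsCompact K) (hne : K.Nonempty)
    (hg : LowerSemicontinuous g) : ∃ v ∈ K, IsMinOn g K v ∧ sInf (g '' K) = g v := by
  obtain ⟨v, hvK, hmin⟩ := (hg.lowerSemicontinuousOn K).exists_isMinOn hne hK
  have hleast : IsLeast (g '' K) (g v) :=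
    ⟨mem_image_of_mem g hvK, forall_mem_image.2 (isMinOn_iff.1 hmin)⟩
  exact ⟨v, hvK, hmin, hleast.csInf_eq⟩

theorem IsCompact.lt_csInf_image_iff (hK : IsCompact K) (hne : K.Nonempty)
    (hg : LowerSemicontinuous g) {c : β} : c < sInf (g '' K) ↔ ∀ w ∈ K, c < g w := by
  obtain ⟨v, hvK, hmin, hv⟩ := hK.exists_isMinOn_csInf_image_eq hne hg
  rw [hv]
  exact ⟨fun hc w hw => hc.trans_le (isMinOn_iff.1 hmin w hw), fun h => h v hvK⟩

theorem IsCompact.isCompact_setOf_eq_csInf_image (hK : IsCompact K)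
    (hg : LowerSemicontinuous g) : IsCompact {v ∈ K | g v = sInf (g '' K)} := by
  rcases K.eq_empty_or_nonempty with rfl | hne
  · simp
  obtain ⟨v, -, hmin, hv⟩ := hK.exists_isMinOn_csInf_image_eq hne hg
  have hsol : {w ∈ K | g w = sInf (g '' K)} = K ∩ g ⁻¹' Iic (g v) := by
    ext w
    simp only [mem_sep_iff, mem_inter_iff, mem_preimage, mem_Iic, hv]
    exact and_congr_right fun hw => ⟨le_of_eq, fun h => h.antisymm (isMinOn_iff.1 hmin w hw)⟩
  rw [hsol]
  exact hK.inter_right (hg.isClosed_preimage _)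

end CompactMinimization

section ValueFunction

variable {X Y β : Type*} [TopologicalSpace X] [TopologicalSpace Y]
  [ConditionallyCompleteLinearOrder β]

theorem lowerSemicontinuous_csInf_image {F : X → Set Y} {f : X → Y → β}
    (hF_ne : ∀ x, (F x).Nonempty) (hF_cpt : ∀ x, IsCompact (F x))
    (hF : UpperHemicontinuous F) (hf : LowerSemicontinuous fun q : X × Y => f q.1 q.2) :
    LowerSemicontinuous fun x => sInf (f x '' F x) := by
  have hfx : ∀ x, LowerSemicontinuous (f x) := fun x => hf.comp (Continuous.prodMk_right x)
  intro x c (hc : c < sInf (f x '' F x))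
  show ∀ᶠ x' in 𝓝 x, c < sInf (f x' '' F x')
  rw [(hF_cpt x).lt_csInf_image_iff (hF_ne x) (hfx x)] at hc
  have hslice : {x} ×ˢ F x ⊆ {q : X × Y | c < f q.1 q.2} := by
    rintro ⟨x', w⟩ ⟨rfl, hw⟩
    exact hc w hw
  obtain ⟨A, B, hA, hB, hxA, hFB, hAB⟩ :=
    generalized_tube_lemma isCompact_singleton (hF_cpt x) (hf.isOpen_preimage c) hslice
  filter_upwards [hA.mem_nhds (hxA rfl), hF.forall_isOpen x B hB hFB] with x' hx'A hx'B
  rw [(hF_cpt x').lt_csInf_image_iff (hF_ne x') (hfx x')]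
  exact fun w hw => hAB (mk_mem_prod hx'A (hx'B hw))

end ValueFunction

/-- Berge's maximum theorem (minimization form): if `F` is an upper semicontinuous
compact-nonempty-valued multifunction and `f` is lower semicontinuous, then the value
function `f*` is well defined (the minimum is attained) and lower semicontinuous, and
the solution multifunction `F*` has nonempty compact values. -/
theorem berge_maximum_theorem_min
    (U V : Type*) [MetricSpace U] [MetricSpace V]
    (F : U → Set V)
    (hF_ne : ∀ u, (F u).Nonempty)
    (hF_cpt : ∀ u, IsCompact (F u))
    (hF_usc : ∀ u, ∀ G : Set V, IsOpen G → F u ⊆ G →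
      ∃ W ∈ nhds u, ∀ u' ∈ W, F u' ⊆ G)
    (f : U → V → ℝ)
    (hf : LowerSemicontinuous (fun q : U × V => f q.1 q.2)) :
    (∀ u, ∃ v ∈ F u, f u v = sInf ((fun v' => f u v') '' F u)) ∧
    LowerSemicontinuous (fun u => sInf ((fun v' => f u v') '' F u)) ∧
    (∀ u, ({v ∈ F u | f u v = sInf ((fun v' => f u v') '' F u)}).Nonempty ∧
      IsCompact {v ∈ F u | f u v = sInf ((fun v' => f u v') '' F u)}) := by
  have hfu : ∀ u, LowerSemicontinuous (f u) := fun u => hf.comp (Continuous.prodMk_right u)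
  have hmin : ∀ u, ∃ v ∈ F u, f u v = sInf (f u '' F u) := fun u => by
    obtain ⟨v, hv, -, hinf⟩ := (hF_cpt u).exists_isMinOn_csInf_image_eq (hF_ne u) (hfu u)
    exact ⟨v, hv, hinf.symm⟩
  have hF : UpperHemicontinuous F := .of_forall_isOpen fun u G hG hFG =>
    eventually_iff_exists_mem.2 (hF_usc u G hG hFG)
  exact ⟨hmin, lowerSemicontinuous_csInf_image hF_ne hF_cpt hF hf,
    fun u => ⟨hmin u, (hF_cpt u).isCompact_setOf_eq_csInf_image (hfu u)⟩⟩
end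

section
/- If U and V are metric spaces, A : U → 2^V is an upper semicontinuous set-valued map with nonempty compact values, and f : U × V → ℝ is lower semicontinuous and bounded below on Gr(A) = {(u,v) : v ∈ A(u)}, then f restricted to Gr(A) is K-inf-compact: for every compact K ⊆ U and λ ∈ ℝ, the set {(u,v) : u ∈ K, v ∈ A(u), f(u,v) ≤ λ} is compact. -/
open Filter Topology Set

/-!
The part of the graph of `A` lying over a compact set `K` is compact: an ultrafilter on it
converges in the first coordinate to some `u ∈ K`, and upper semicontinuity pushes its second
coordinate into every neighbourhood of the compact set `A u`, so it converges there as well.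
The sublevel sets of `f` are closed in the graph by lower semicontinuity, hence compact.
-/

theorem IsCompact.exists_ultrafilter_le_nhds_of_le_nhdsSet {X : Type*} [TopologicalSpace X]
    {s : Set X} (hs : IsCompact s) (𝒰 : Ultrafilter X) (h𝒰 : ↑𝒰 ≤ 𝓝ˢ s) :
    ∃ x ∈ s, ↑𝒰 ≤ 𝓝 x := by
  by_contra! H
  have hdisj : Disjoint (𝓝ˢ s) 𝒰 :=
    hs.disjoint_nhdsSet_left.2 fun x hx => (Ultrafilter.disjoint_iff_not_le.2 (H x hx)).symm
  exact 𝒰.neBot.ne (disjoint_self.1 (hdisj.mono_left h𝒰))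

section Graph

variable {α β : Type*} [TopologicalSpace α] [TopologicalSpace β] {A : α → Set β}
  {s : Set α} {u : α}

theorem UpperHemicontinuousWithinAt.tendsto_snd_nhdsSet (hA : UpperHemicontinuousWithinAt A s u)
    {l : Filter (α × β)} (hgraph : ∀ᶠ q in l, q.2 ∈ A q.1) (hu : Tendsto Prod.fst l (𝓝[s] u)) :
    Tendsto Prod.snd l (𝓝ˢ (A u)) := fun t ht => by
  refine mem_map.2 ?_
  filter_upwards [hu (upperHemicontinuousWithinAt_iff.1 hA t ht), hgraph] with q hq hqA
  exact subset_of_mem_nhdsSet hq hqA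

theorem UpperHemicontinuousWithinAt.exists_ultrafilter_le_nhds
    (hA : UpperHemicontinuousWithinAt A s u) (hAu : IsCompact (A u)) (𝒰 : Ultrafilter (α × β))
    (hgraph : ∀ᶠ q in (𝒰 : Filter (α × β)), q.2 ∈ A q.1)
    (hu : Tendsto Prod.fst (𝒰 : Filter (α × β)) (𝓝[s] u)) :
    ∃ v ∈ A u, ↑𝒰 ≤ 𝓝 (u, v) := by
  obtain ⟨v, hv, hv𝒰⟩ := hAu.exists_ultrafilter_le_nhds_of_le_nhdsSet (𝒰.map Prod.snd)
    (hA.tendsto_snd_nhdsSet hgraph hu)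
  refine ⟨v, hv, ?_⟩
  rw [nhds_prod_eq]
  exact (tendsto_nhdsWithin_iff.1 hu).1.prodMk hv𝒰

theorem UpperHemicontinuousOn.isCompact_graph_inter_fst_preimage (hA : UpperHemicontinuousOn A s)
    (hs : IsCompact s) (hAc : ∀ u ∈ s, IsCompact (A u)) :
    IsCompact {q : α × β | q.1 ∈ s ∧ q.2 ∈ A q.1} := by
  refine isCompact_iff_ultrafilter_le_nhds'.2 fun 𝒰 h𝒰 => ?_
  have hs𝒰 : s ∈ 𝒰.map Prod.fst := Ultrafilter.mem_map.2 (mem_of_superset h𝒰 fun q hq => hq.1)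
  obtain ⟨u, hus, hu⟩ := hs.ultrafilter_le_nhds' _ hs𝒰
  obtain ⟨v, hv, h⟩ := (upperHemicontinuousOn_iff.1 hA u hus).exists_ultrafilter_le_nhds
    (hAc u hus) 𝒰 (mem_of_superset h𝒰 fun q hq => hq.2) (tendsto_nhdsWithin_iff.2 ⟨hu, hs𝒰⟩)
  exact ⟨(u, v), ⟨hus, hv⟩, h⟩

end Graph

theorem lsc_on_usc_graph_K_inf_compact_general
    (U V : Type*) [MetricSpace U] [MetricSpace V]
    (A : U → Set V)
    (hA_cpt : ∀ u, IsCompact (A u))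
    (hA_usc : ∀ u, ∀ G : Set V, IsOpen G → A u ⊆ G →
      ∃ W ∈ nhds u, ∀ u' ∈ W, A u' ⊆ G)
    (f : U → V → ℝ)
    (hf_lsc : LowerSemicontinuousOn (fun q : U × V => f q.1 q.2)
      {q : U × V | q.2 ∈ A q.1}) :
    ∀ K : Set U, IsCompact K → ∀ l : ℝ,
      IsCompact {q : U × V | q.1 ∈ K ∧ q.2 ∈ A q.1 ∧ f q.1 q.2 ≤ l} := by
  intro K hK l
  have hA : UpperHemicontinuous A := .of_forall_isOpen fun u G hG hAG =>
    eventually_iff_exists_mem.2 (hA_usc u G hG hAG)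
  have hgraphK := (hA.upperHemicontinuousOn K).isCompact_graph_inter_fst_preimage hK
    fun u _ => hA_cpt u
  convert (hf_lsc.mono fun q hq => hq.2).isCompact_inter_preimage_Iic hgraphK l using 1
  ext q
  simp [and_assoc]

/-- If `A` is an upper semicontinuous multifunction with nonempty compact values and
`f` is lower semicontinuous and bounded below on the graph of `A`, then `f` restricted
to the graph of `A` is `K`-inf-compact. -/
theorem lsc_on_usc_graph_K_inf_compact
    (U V : Type*) [MetricSpace U] [MetricSpace V]
    (A : U → Set V)
    (hA_ne : ∀ u, (A u).Nonempty)
    (hA_cpt : ∀ u, IsCompact (A u))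
    (hA_usc : ∀ u, ∀ G : Set V, IsOpen G → A u ⊆ G →
      ∃ W ∈ nhds u, ∀ u' ∈ W, A u' ⊆ G)
    (f : U → V → ℝ)
    (hf_lsc : LowerSemicontinuousOn (fun q : U × V => f q.1 q.2)
      {q : U × V | q.2 ∈ A q.1})
    (m : ℝ) (hf_bdd : ∀ u, ∀ v ∈ A u, m ≤ f u v) :
    ∀ K : Set U, IsCompact K → ∀ l : ℝ,
      IsCompact {q : U × V | q.1 ∈ K ∧ q.2 ∈ A q.1 ∧ f q.1 q.2 ≤ l} :=
  lsc_on_usc_graph_K_inf_compact_general U V A hA_cpt hA_usc f hf_lsc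
end

section
/- A K-inf-compact function is lower semicontinuous: if U, V are metric spaces and f : U × V → ℝ is K-inf-compact on U × V (every sublevel set over a compact base in U is compact), then f is lower semicontinuous on U × V. -/
/-!
A sequence converging in `U × V`, together with its limit, has first coordinates lying in a compact
set `K ⊆ U`. The sublevel set of `f` over `K` is compact, hence closed, so the limit of a sequence in
a sublevel set of `f` stays in it. In a sequential space this makes every sublevel set closed.
-/

open Set

theorem isClosed_sublevel_of_isCompact_sublevel_fst {U V γ : Type*}
    [TopologicalSpace U] [TopologicalSpace V] [SequentialSpace (U × V)] [T2Space (U × V)]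
    [LinearOrder γ] {f : U × V → γ}
    (hf : ∀ K : Set U, IsCompact K → ∀ l : γ, IsCompact {q : U × V | q.1 ∈ K ∧ f q ≤ l})
    (l : γ) : IsClosed (f ⁻¹' Iic l) := by
  refine IsSeqClosed.isClosed fun x p hx hxp => ?_
  set K := insert p.1 (range fun n => (x n).1)
  have hK : IsCompact K := ((continuous_fst.tendsto p).comp hxp).isCompact_insert_range
  have hp : p ∈ {q : U × V | q.1 ∈ K ∧ f q ≤ l} :=
    (hf K hK l).isClosed.isSeqClosed (fun n => ⟨mem_insert_of_mem _ ⟨n, rfl⟩, hx n⟩) hxp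
  exact hp.2

/-- A `K`-inf-compact function on a product of metric spaces is lower
semicontinuous. -/
theorem K_inf_compact_lowerSemicontinuous
    (U V : Type*) [MetricSpace U] [MetricSpace V]
    (f : U × V → ℝ)
    (hf : ∀ K : Set U, IsCompact K → ∀ l : ℝ,
      IsCompact {q : U × V | q.1 ∈ K ∧ f q ≤ l}) :
    LowerSemicontinuous f :=
  lowerSemicontinuous_iff_isClosed_preimage.mpr (isClosed_sublevel_of_isCompact_sublevel_fst hf)
end

section
/- If f : U × V → ℝ is K-inf-compact on U × V for metric spaces U and V, then the value function f*(u) := inf_{v ∈ V} f(u,v) is lower semicontinuous on U, and if f* is finite at u then the infimum is attained. -/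
/-!
Each section `{v | f u v ≤ l}` is the projection of a compact set, so `f u` is lower
semicontinuous with compact sublevel sets and attains its infimum. Hence, for compact
`K ⊆ U`, the trace `K ∩ {u | f* u ≤ l}` is the projection to `U` of the compact set
`{(u, v) ∈ K × V | f u v ≤ l}`, so it is closed; since metric spaces are compactly
generated, `{u | f* u ≤ l}` itself is closed, i.e. `f*` is lower semicontinuous.
-/

open Set

section

variable {U V β : Type*} [TopologicalSpace U] [TopologicalSpace V]
  [ConditionallyCompleteLinearOrder β]

theorem exists_forall_le_of_isCompact_setOf_le [T2Space V] [Nonempty V] {g : V → β}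
    (hg : ∀ l, IsCompact {v | g v ≤ l}) : ∃ v, ∀ w, g v ≤ g w := by
  have hlsc : LowerSemicontinuous g :=
    lowerSemicontinuous_iff_isClosed_preimage.2 fun l ↦ (hg l).isClosed
  obtain ⟨v₀⟩ := ‹Nonempty V›
  obtain ⟨v, hv, hmin⟩ :=
    (hlsc.lowerSemicontinuousOn _).exists_isMinOn ⟨v₀, le_refl (g v₀)⟩ (hg (g v₀))
  refine ⟨v, fun w ↦ ?_⟩
  rcases le_total (g w) (g v₀) with hw | hw
  · exact hmin hw
  · exact hv.trans hw

def KInfCompact (f : U → V → β) : Prop :=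
  ∀ K : Set U, IsCompact K → ∀ l : β, IsCompact {q : U × V | q.1 ∈ K ∧ f q.1 q.2 ≤ l}

namespace KInfCompact

variable {f : U → V → β}

theorem isCompact_setOf_le (hf : KInfCompact f) (u : U) (l : β) :
    IsCompact {v | f u v ≤ l} := by
  convert (hf {u} isCompact_singleton l).image continuous_snd using 1
  ext v
  simp

variable [T2Space V] [Nonempty V]

theorem exists_isLeast_range (hf : KInfCompact f) (u : U) :
    ∃ v, IsLeast (range (f u)) (f u v) := by
  obtain ⟨v, hv⟩ := exists_forall_le_of_isCompact_setOf_le (hf.isCompact_setOf_le u)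
  exact ⟨v, mem_range_self v, forall_mem_range.2 hv⟩

theorem exists_eq_iInf (hf : KInfCompact f) (u : U) : ∃ v, f u v = ⨅ w, f u w := by
  obtain ⟨v, hv⟩ := hf.exists_isLeast_range u
  exact ⟨v, hv.isGLB.ciInf_eq.symm⟩

theorem iInf_le_iff (hf : KInfCompact f) (u : U) (l : β) :
    ⨅ v, f u v ≤ l ↔ ∃ v, f u v ≤ l := by
  obtain ⟨v, hv⟩ := hf.exists_isLeast_range u
  rw [hv.isGLB.ciInf_eq]
  exact ⟨fun h ↦ ⟨v, h⟩, fun ⟨w, hw⟩ ↦ (hv.2 (mem_range_self w)).trans hw⟩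

theorem preimage_iInf_Iic_inter (hf : KInfCompact f) (K : Set U) (l : β) :
    (fun u ↦ ⨅ v, f u v) ⁻¹' Iic l ∩ K = Prod.fst '' {q : U × V | q.1 ∈ K ∧ f q.1 q.2 ≤ l} := by
  ext u
  simp [hf.iInf_le_iff, and_comm]

theorem lowerSemicontinuous_iInf [T2Space U] [CompactlyGeneratedSpace U]
    (hf : KInfCompact f) : LowerSemicontinuous fun u ↦ ⨅ v, f u v := by
  refine lowerSemicontinuous_iff_isClosed_preimage.2 fun l ↦
    CompactlyGeneratedSpace.isClosed fun K hK ↦ ?_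
  rw [hf.preimage_iInf_Iic_inter K l]
  exact ((hf K hK l).image continuous_fst).isClosed

end KInfCompact

end

theorem K_inf_compact_value_function_general
    (U V : Type*) [MetricSpace U] [MetricSpace V] [Nonempty V]
    (f : U → V → ℝ)
    (hf : ∀ K : Set U, IsCompact K → ∀ l : ℝ,
      IsCompact {q : U × V | q.1 ∈ K ∧ f q.1 q.2 ≤ l}) :
    LowerSemicontinuous (fun u => ⨅ v : V, f u v) ∧
    ∀ u, ∃ v : V, f u v = ⨅ v' : V, f u v' :=
  ⟨KInfCompact.lowerSemicontinuous_iInf hf, KInfCompact.exists_eq_iInf hf⟩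

/-- If `f` is `K`-inf-compact (and bounded below) on `U × V`, then the value function
`f*(u) = inf_v f(u,v)` is lower semicontinuous, and the infimum is attained whenever
it is finite (which holds since `V` is nonempty and `f` is bounded below). -/
theorem K_inf_compact_value_function
    (U V : Type*) [MetricSpace U] [MetricSpace V] [Nonempty V]
    (f : U → V → ℝ)
    (m : ℝ) (hf_bdd : ∀ u v, m ≤ f u v)
    (hf : ∀ K : Set U, IsCompact K → ∀ l : ℝ,
      IsCompact {q : U × V | q.1 ∈ K ∧ f q.1 q.2 ≤ l}) :
    LowerSemicontinuous (fun u => ⨅ v : V, f u v) ∧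
    ∀ u, ∃ v : V, f u v = ⨅ v' : V, f u v' :=
  K_inf_compact_value_function_general U V f hf
end

section
/- (Aumann's representation lemma) Let S₁ and S₂ be standard Borel spaces and κ a stochastic kernel on S₁ given S₂ (a measurable family of probability measures κ(·|s₂) on S₁). Then there exists a Borel measurable function φ : S₂ × [0,1] → S₁ such that κ(B|s₂) = Leb{ω ∈ [0,1] : φ(s₂,ω) ∈ B} for every Borel set B ⊆ S₁ and every s₂ ∈ S₂. -/
open MeasureTheory ProbabilityTheory Set unitInterval

lemma unitInterval.map_projIcc_volume_restrict :
    (volume.restrict I).map (projIcc 0 1 zero_le_one) = (volume : Measure I) := by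
  rw [← measurePreserving_coe.map_eq,
    Measure.map_map continuous_projIcc.measurable measurable_subtype_coe]
  simp only [Function.comp_def, projIcc_val, Measure.map_id']

theorem aumann_kernel_representation_general
    (S₁ S₂ : Type*) [MeasurableSpace S₁] [StandardBorelSpace S₁]
    [MeasurableSpace S₂]
    (κ : Kernel S₂ S₁) [IsMarkovKernel κ] :
    ∃ φ : S₂ × ℝ → S₁, Measurable φ ∧
      ∀ (s₂ : S₂) (B : Set S₁), MeasurableSet B →
        κ s₂ B = (volume.restrict (Set.Icc (0 : ℝ) 1)) {ω : ℝ | φ (s₂, ω) ∈ B} := by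
  rcases isEmpty_or_nonempty S₂ with hS₂ | hS₂
  · exact ⟨fun p => isEmptyElim p.1, measurable_of_empty _, fun s => isEmptyElim s⟩
  have : Nonempty S₁ := nonempty_of_isProbabilityMeasure (κ hS₂.some)
  obtain ⟨f, hf, hfκ⟩ := κ.exists_measurable_map_eq_unitInterval
  have hproj : Measurable (projIcc (0 : ℝ) 1 zero_le_one) := continuous_projIcc.measurable
  refine ⟨fun p => f p.1 (projIcc 0 1 zero_le_one p.2),
    hf.comp (measurable_fst.prodMk (hproj.comp measurable_snd)), fun s B hB => ?_⟩
  have hfs : Measurable (f s) := hf.of_uncurry_left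
  rw [← hfκ s, Measure.map_apply hfs hB, ← map_projIcc_volume_restrict,
    Measure.map_apply hproj (hfs hB)]
  rfl

/-- Aumann's representation lemma: every stochastic kernel `κ` from a standard Borel
space `S₂` to a standard Borel space `S₁` is generated by a Borel function
`φ : S₂ × [0,1] → S₁` and the Lebesgue measure on `[0,1]`. -/
theorem aumann_kernel_representation
    (S₁ S₂ : Type*) [MeasurableSpace S₁] [StandardBorelSpace S₁]
    [MeasurableSpace S₂] [StandardBorelSpace S₂]
    (κ : Kernel S₂ S₁) [IsMarkovKernel κ] :
    ∃ φ : S₂ × ℝ → S₁, Measurable φ ∧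
      ∀ (s₂ : S₂) (B : Set S₁), MeasurableSet B →
        κ s₂ B = (volume.restrict (Set.Icc (0 : ℝ) 1)) {ω : ℝ | φ (s₂, ω) ∈ B} :=
  aumann_kernel_representation_general S₁ S₂ κ
end

section
/- (Continuity in total variation for multiplicative noise) Let f : S₂ → ℝⁿ be continuous with fⱼ(s₂) ≠ 0 for all s₂ ∈ S₂ and all coordinates j = 1,…,n, where S₂ is a metric space, and let p be a probability measure on ℝⁿ absolutely continuous with respect to Lebesgue measure. Then the kernel κ(B|s₂) := p{ξ ∈ ℝⁿ : diag(ξ) f(s₂) ∈ B}, i.e., the distribution of the coordinatewise product (ξ₁ f₁(s₂), …, ξₙ fₙ(s₂)), is continuous in total variation in s₂. -/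
/-!
If `ξ` has density `ρ`, then `ξ * a` has density `y ↦ |∏ aᵢ|⁻¹ ρ (y / a)`, so the total variation
distance between the laws of `ξ * a` and `ξ * b` is at most the `L¹` distance of these densities.
That distance tends to `0` as `a → b`: for continuous compactly supported `ρ` this is continuity
of a parametric integral with uniformly compact support, and the general case follows by density,
since the rescaling preserves `L¹` distances.
-/

open MeasureTheory Filter Topology

theorem abs_setIntegral_sub_setIntegral_le {α : Type*} [MeasurableSpace α] {μ : Measure α}
    {u v : α → ℝ} (hu : Integrable u μ) (hv : Integrable v μ) (B : Set α) :
    |∫ x in B, u x ∂μ - ∫ x in B, v x ∂μ| ≤ ∫ x, |u x - v x| ∂μ := by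
  rw [← integral_sub hu.integrableOn hv.integrableOn]
  calc |∫ x in B, u x - v x ∂μ| ≤ ∫ x in B, |u x - v x| ∂μ := abs_integral_le_integral_abs
    _ ≤ ∫ x, |u x - v x| ∂μ :=
      setIntegral_le_integral (hu.sub hv).abs (ae_of_all _ fun x => abs_nonneg _)

theorem integral_abs_sub_le_add {α : Type*} [MeasurableSpace α] {μ : Measure α}
    {u v w : α → ℝ} (hu : Integrable u μ) (hv : Integrable v μ) (hw : Integrable w μ) :
    ∫ x, |u x - w x| ∂μ ≤ ∫ x, |u x - v x| ∂μ + ∫ x, |v x - w x| ∂μ := by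
  calc ∫ x, |u x - w x| ∂μ ≤ ∫ x, |u x - v x| + |v x - w x| ∂μ :=
        integral_mono (hu.sub hw).abs ((hu.sub hv).abs.add (hv.sub hw).abs)
          fun x => abs_sub_le (u x) (v x) (w x)
    _ = ∫ x, |u x - v x| ∂μ + ∫ x, |v x - w x| ∂μ := integral_add (hu.sub hv).abs (hv.sub hw).abs

section PiRescale

variable {ι : Type*} {a b : ι → ℝ}

noncomputable def MeasurableEquiv.piMulRight₀ (a : ι → ℝ) (ha : ∀ i, a i ≠ 0) :
    (ι → ℝ) ≃ᵐ (ι → ℝ) :=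
  MeasurableEquiv.piCongrRight fun i => MeasurableEquiv.mulRight₀ (a i) (ha i)

@[simp]
theorem MeasurableEquiv.coe_piMulRight₀ (ha : ∀ i, a i ≠ 0) :
    ⇑(MeasurableEquiv.piMulRight₀ a ha) = (· * a) :=
  rfl

variable [Fintype ι]

theorem eventually_nhds_forall_ne_zero (hb : ∀ i, b i ≠ 0) : ∀ᶠ a in 𝓝 b, ∀ i, a i ≠ 0 :=
  eventually_all.2 fun i => (continuous_apply i).continuousAt.eventually_ne (hb i)

theorem map_mul_right_volume_pi (ha : ∀ i, a i ≠ 0) :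
    (volume : Measure (ι → ℝ)).map (· * a) = ENNReal.ofReal (∏ i, |a i|)⁻¹ • volume := by
  classical
  have hdiag : (· * a) = ⇑(Matrix.toLin' (Matrix.diagonal a)) := by
    funext x i
    simp [Matrix.mulVec_diagonal, mul_comm]
  have hdet : LinearMap.det (Matrix.toLin' (Matrix.diagonal a)) = ∏ i, a i := by
    rw [LinearMap.det_toLin', Matrix.det_diagonal]
  have hdet_ne : LinearMap.det (Matrix.toLin' (Matrix.diagonal a)) ≠ 0 := by
    rw [hdet]; exact Finset.prod_ne_zero_iff.2 fun i _ => ha i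
  rw [hdiag, Real.map_linearMap_volume_pi_eq_smul_volume_pi hdet_ne, hdet, abs_inv,
    Finset.abs_prod]

/-- The density of `ξ * a` when `ξ` has density `g`. -/
noncomputable def piRescale (a : ι → ℝ) (g : (ι → ℝ) → ℝ) (y : ι → ℝ) : ℝ :=
  (∏ i, |a i|)⁻¹ * g (y / a)

theorem integral_piRescale (ha : ∀ i, a i ≠ 0) (g : (ι → ℝ) → ℝ) :
    ∫ y, piRescale a g y = ∫ x, g x := by
  have h := integral_map_equiv (μ := volume) (MeasurableEquiv.piMulRight₀ a ha) (fun y => g (y / a))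
  have hcancel : ∀ x : ι → ℝ, x * a / a = x := fun x => by
    funext i; simp [ha i]
  simp only [MeasurableEquiv.coe_piMulRight₀, map_mul_right_volume_pi ha, integral_smul_measure,
    hcancel] at h
  rw [← h, ENNReal.toReal_ofReal (by positivity), smul_eq_mul, ← integral_const_mul]
  rfl

theorem integrable_piRescale {g : (ι → ℝ) → ℝ} (hg : Integrable g) (ha : ∀ i, a i ≠ 0) :
    Integrable (piRescale a g) := by
  have hinv : ∀ i, (a⁻¹) i ≠ 0 := fun i => inv_ne_zero (ha i)
  refine Integrable.const_mul ?_ _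
  have h := (integrable_map_equiv (μ := volume) (MeasurableEquiv.piMulRight₀ a⁻¹ hinv) g).1
  rw [MeasurableEquiv.coe_piMulRight₀, map_mul_right_volume_pi hinv] at h
  simpa [Function.comp_def, div_eq_mul_inv] using h (hg.smul_measure ENNReal.ofReal_ne_top)

theorem piRescale_indicator_preimage (ha : ∀ i, a i ≠ 0) (g : (ι → ℝ) → ℝ) (B : Set (ι → ℝ)) :
    piRescale a (((· * a) ⁻¹' B).indicator g) = B.indicator (piRescale a g) := by
  funext y
  have hy : y / a * a = y := by
    funext i; simp [ha i]
  by_cases hB : y ∈ B <;> simp [piRescale, hy, hB]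

theorem MeasureTheory.Measure.map_mul_right_real_eq_setIntegral_piRescale (q : Measure (ι → ℝ))
    [IsFiniteMeasure q] (hq : q ≪ volume) (ha : ∀ i, a i ≠ 0) {B : Set (ι → ℝ)}
    (hB : MeasurableSet B) :
    (q.map (· * a)).real B = ∫ y in B, piRescale a (fun x => (q.rnDeriv volume x).toReal) y := by
  have hmul : Measurable (· * a : (ι → ℝ) → (ι → ℝ)) := measurable_mul_const a
  rw [← integral_indicator hB, ← piRescale_indicator_preimage ha, integral_piRescale ha,
    integral_indicator (hmul hB), Measure.setIntegral_toReal_rnDeriv hq,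
    map_measureReal_apply hmul hB]

theorem integral_abs_piRescale_sub (ha : ∀ i, a i ≠ 0) (g h : (ι → ℝ) → ℝ) :
    ∫ y, |piRescale a g y - piRescale a h y| = ∫ x, |g x - h x| := by
  rw [← integral_piRescale ha fun x => |g x - h x|]
  congr 1 with y
  rw [piRescale, piRescale, piRescale, ← mul_sub, abs_mul, abs_of_nonneg (by positivity)]

theorem continuousAt_piRescale_uncurry {h : (ι → ℝ) → ℝ} (hh : Continuous h)
    (ha : ∀ i, a i ≠ 0) (y : ι → ℝ) :
    ContinuousAt (fun p : (ι → ℝ) × (ι → ℝ) => piRescale p.1 h p.2) (a, y) := by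
  have hprod : ContinuousAt (fun p : (ι → ℝ) × (ι → ℝ) => (∏ i, |p.1 i|)⁻¹) (a, y) :=
    (by fun_prop : Continuous fun p : (ι → ℝ) × (ι → ℝ) => ∏ i, |p.1 i|).continuousAt.inv₀
      (Finset.prod_ne_zero_iff.2 fun i _ => abs_ne_zero.2 (ha i))
  have hdiv : ContinuousAt (fun p : (ι → ℝ) × (ι → ℝ) => p.2 / p.1) (a, y) :=
    continuousAt_pi.2 fun i =>
      ((continuous_apply i).comp continuous_snd).continuousAt.div
        ((continuous_apply i).comp continuous_fst).continuousAt (ha i)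
  exact hprod.mul (hh.continuousAt.comp hdiv)

theorem HasCompactSupport.tendsto_integral_abs_piRescale_sub {h : (ι → ℝ) → ℝ}
    (hh : HasCompactSupport h) (hc : Continuous h) (hb : ∀ i, b i ≠ 0) :
    Tendsto (fun a => ∫ y, |piRescale a h y - piRescale b h y|) (𝓝 b) (𝓝 0) := by
  obtain ⟨t, ht, htU, htc⟩ := local_compact_nhds (eventually_nhds_forall_ne_zero hb)
  set k := (fun p : (ι → ℝ) × (ι → ℝ) => p.2 * p.1) '' (t ×ˢ tsupport h)
  have hk : IsCompact k := (htc.prod hh).image (by fun_prop)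
  have hsupp : ∀ a ∈ t, ∀ y ∉ k, piRescale a h y = 0 := by
    intro a ha y hy
    by_contra hne
    have hya : y / a ∈ tsupport h := subset_tsupport h (right_ne_zero_of_mul hne)
    refine hy ⟨(a, y / a), ⟨ha, hya⟩, ?_⟩
    funext i
    simp [htU ha i]
  have hcont : ContinuousOn
      (Function.uncurry fun a y => |piRescale a h y - piRescale b h y|) (t ×ˢ Set.univ) := by
    rintro ⟨a, y⟩ ⟨ha, -⟩
    refine ContinuousAt.continuousWithinAt (ContinuousAt.abs (ContinuousAt.sub ?_ ?_))
    · exact continuousAt_piRescale_uncurry hc (htU ha) y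
    · exact (continuousAt_piRescale_uncurry hc hb y).comp
        (f := fun p : (ι → ℝ) × (ι → ℝ) => (b, p.2)) (x := (a, y)) (by fun_prop)
  have h0 := ((continuousOn_integral_of_compact_support (μ := volume) hk hcont fun a y ha hy => by
    simp [hsupp a ha y hy, hsupp b (mem_of_mem_nhds ht) y hy]).continuousAt ht).tendsto
  simpa using h0

theorem MeasureTheory.Integrable.tendsto_integral_abs_piRescale_sub {g : (ι → ℝ) → ℝ}
    (hg : Integrable g) (hb : ∀ i, b i ≠ 0) :
    Tendsto (fun a => ∫ y, |piRescale a g y - piRescale b g y|) (𝓝 b) (𝓝 0) := by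
  refine tendsto_order.2 ⟨fun c hc => Eventually.of_forall fun a =>
    hc.trans_le (integral_nonneg fun y => abs_nonneg _), fun ε hε => ?_⟩
  obtain ⟨h, hh, hgh, hc, hhi⟩ :=
    hg.exists_hasCompactSupport_integral_sub_le (by positivity : 0 < ε / 3)
  have hgh' : ∫ x, |g x - h x| ≤ ε / 3 := hgh
  have hhg : ∫ x, |h x - g x| ≤ ε / 3 := by simpa only [abs_sub_comm] using hgh'
  filter_upwards [eventually_nhds_forall_ne_zero hb,
    (hh.tendsto_integral_abs_piRescale_sub hc hb).eventually_lt_const (by positivity : 0 < ε / 3)]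
    with a ha hmid
  calc ∫ y, |piRescale a g y - piRescale b g y|
      ≤ (∫ y, |piRescale a g y - piRescale a h y|) + ((∫ y, |piRescale a h y - piRescale b h y|)
          + ∫ y, |piRescale b h y - piRescale b g y|) := by
        refine (integral_abs_sub_le_add (integrable_piRescale hg ha) (integrable_piRescale hhi ha)
          (integrable_piRescale hg hb)).trans (add_le_add le_rfl ?_)
        exact integral_abs_sub_le_add (integrable_piRescale hhi ha) (integrable_piRescale hhi hb)
          (integrable_piRescale hg hb)
    _ < ε := by
        rw [integral_abs_piRescale_sub ha, integral_abs_piRescale_sub hb]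
        linarith

end PiRescale

/-- Continuity in total variation for multiplicative noise: if `f` is continuous with
nonvanishing coordinates and `p ≪ λⁿ`, then the distribution of the coordinatewise
product `diag(ξ) f(s₂)` (with `ξ ∼ p`) depends continuously on `s₂` in total
variation. -/
theorem multiplicative_noise_continuous_in_total_variation
    (S₂ : Type*) [MetricSpace S₂] (n : ℕ)
    (f : S₂ → (Fin n → ℝ)) (hf : Continuous f)
    (hf_ne : ∀ (s₂ : S₂) (j : Fin n), f s₂ j ≠ 0)
    (p : Measure (Fin n → ℝ)) [IsProbabilityMeasure p]
    (hp : p ≪ (volume : Measure (Fin n → ℝ))) :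
    ∀ s₂ : S₂, ∀ ε > (0 : ℝ), ∃ δ > (0 : ℝ), ∀ s₂' : S₂, dist s₂' s₂ < δ →
      ∀ B : Set (Fin n → ℝ), MeasurableSet B →
        |((p.map (fun ξ => fun j => ξ j * f s₂' j)) B).toReal
          - ((p.map (fun ξ => fun j => ξ j * f s₂ j)) B).toReal| < ε := by
  intro s₂ ε hε
  have hρ : Integrable fun x => (p.rnDeriv volume x).toReal := Measure.integrable_toReal_rnDeriv
  have hL1 := (hρ.tendsto_integral_abs_piRescale_sub (hf_ne s₂)).comp (hf.tendsto s₂)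
  obtain ⟨δ, hδ, hclose⟩ := Metric.eventually_nhds_iff.1 (hL1.eventually_lt_const hε)
  refine ⟨δ, hδ, fun s₂' hs B hB => ?_⟩
  change |(p.map (· * f s₂')).real B - (p.map (· * f s₂)).real B| < ε
  rw [Measure.map_mul_right_real_eq_setIntegral_piRescale p hp (hf_ne s₂') hB,
    Measure.map_mul_right_real_eq_setIntegral_piRescale p hp (hf_ne s₂) hB]
  exact (abs_setIntegral_sub_setIntegral_le (integrable_piRescale hρ (hf_ne s₂'))
    (integrable_piRescale hρ (hf_ne s₂)) B).trans_lt (hclose hs)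
end

section
/- A semi-uniform Feller transition probability is weakly continuous: let S₁, S₂, S₃ be metric spaces and Ψ a transition probability from S₃ to S₁ × S₂ such that for every sequence s₃ⁿ → s₃ and every bounded continuous f on S₁, sup_{B Borel in S₂} |∫_{S₁} f(s₁) Ψ(ds₁, B | s₃ⁿ) − ∫_{S₁} f(s₁) Ψ(ds₁, B | s₃)| → 0. Then Ψ is weakly continuous: for every bounded continuous g on S₁ × S₂ of the product form g(s₁,s₂) = f(s₁)h(s₂) with h bounded continuous, and more generally for every bounded continuous g, ∫ g dΨ(·|s₃ⁿ) → ∫ g dΨ(·|s₃). -/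
/-! Fix a Borel set `B ⊆ S₂`. The hypothesis says that the finite measures `A ↦ Ψ(A × B | s₃ⁿ)`
on `S₁` converge weakly, so by the portmanteau theorem `Ψ(U × B | s₃) ≤ liminf Ψ(U × B | s₃ⁿ)`
for every open `U ⊆ S₁`. Cutting the strip `S₁ × B` along the second factors of finitely many
open rectangles extends this inequality to their union, and every open `G ⊆ S₁ × S₂` is exhausted
in measure by such finite unions. This is the portmanteau condition for `Ψ(·|s₃ⁿ) → Ψ(·|s₃)`. -/

open MeasureTheory ProbabilityTheory Filter Topology
open scoped BoundedContinuousFunction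

theorem ENNReal.le_liminf_add {ι : Type*} {L : Filter ι} {u v : ι → ENNReal} :
    L.liminf u + L.liminf v ≤ L.liminf (u + v) := by
  rcases eq_or_ne (L.liminf u) 0 with hu | hu
  · rw [hu, zero_add]
    exact liminf_le_liminf (.of_forall fun i ↦ le_add_self)
  rcases eq_or_ne (L.liminf v) 0 with hv | hv
  · rw [hv, add_zero]
    exact liminf_le_liminf (.of_forall fun i ↦ le_self_add)
  refine (le_liminf_iff).2 fun r hr ↦ ?_
  obtain ⟨a, ha, b, hb, hab⟩ := ENNReal.exists_lt_add_of_lt_add hr hu hv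
  filter_upwards [eventually_lt_of_lt_liminf ha, eventually_lt_of_lt_liminf hb] with i hai hbi
  exact hab.trans (ENNReal.add_lt_add hai hbi)

namespace MeasureTheory

section OpenSets

variable {Ω ι : Type*} [MeasurableSpace Ω] [TopologicalSpace Ω] [OpensMeasurableSpace Ω]
  [HasOuterApproxClosed Ω] {L : Filter ι}

theorem le_liminf_measure_open_of_forall_integral_tendsto
    {μ : Measure Ω} [IsFiniteMeasure μ] {μs : ι → Measure Ω} [∀ i, IsFiniteMeasure (μs i)]
    (h : ∀ f : Ω →ᵇ ℝ, Tendsto (fun i ↦ ∫ x, f x ∂μs i) L (𝓝 (∫ x, f x ∂μ)))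
    {G : Set Ω} (hG : IsOpen G) :
    μ G ≤ L.liminf fun i ↦ μs i G := by
  let ν : FiniteMeasure Ω := ⟨μ, inferInstance⟩
  let νs : ι → FiniteMeasure Ω := fun i ↦ ⟨μs i, inferInstance⟩
  have hlim : Tendsto νs L (𝓝 ν) := FiniteMeasure.tendsto_iff_forall_integral_tendsto.mpr h
  have hmass : Tendsto (fun i ↦ μs i Set.univ) L (𝓝 (μ Set.univ)) := by
    have hmass := ENNReal.tendsto_coe.mpr hlim.mass
    simp only [FiniteMeasure.ennreal_mass] at hmass
    exact hmass
  have hclosed : L.limsup (fun i ↦ μs i Gᶜ) ≤ μ Gᶜ :=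
    FiniteMeasure.limsup_measure_closed_le_of_tendsto hlim hG.isClosed_compl
  refine (le_liminf_iff).2 fun r hr ↦ ?_
  have hr' : μ Gᶜ < μ Set.univ - r := by
    rw [lt_tsub_iff_left, ← measure_add_measure_compl hG.measurableSet]
    exact ENNReal.add_lt_add_right (measure_ne_top _ _) hr
  obtain ⟨c, hGc, hc⟩ := exists_between hr'
  have hc_top : c ≠ ⊤ := (hc.trans_le tsub_le_self).ne_top
  filter_upwards [eventually_lt_of_limsup_lt (hclosed.trans_lt hGc),
    hmass.eventually (lt_mem_nhds (lt_tsub_iff_left.1 hc))] with i hci hri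
  rw [← measure_add_measure_compl hG.measurableSet] at hri
  exact (ENNReal.add_lt_add_iff_right hc_top).1 (hri.trans_le (by gcongr))

end OpenSets

section Strips

variable {α β ι : Type*} [MeasurableSpace α] [MeasurableSpace β] {L : Filter ι}

-- `(μ.restrict (Prod.snd ⁻¹' B)).fst` is the marginal `μ(ds₁, B) : A ↦ μ (A ×ˢ B)`.
def TendstoFstRestrictSnd [TopologicalSpace α] (L : Filter ι) (μs : ι → Measure (α × β))
    (μ : Measure (α × β)) : Prop :=
  ∀ B, MeasurableSet B → ∀ f : α →ᵇ ℝ,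
    Tendsto (fun i ↦ ∫ x, f x ∂((μs i).restrict (Prod.snd ⁻¹' B)).fst) L
      (𝓝 (∫ x, f x ∂(μ.restrict (Prod.snd ⁻¹' B)).fst))

def LeLiminfOnStrips (L : Filter ι) (μs : ι → Measure (α × β)) (μ : Measure (α × β))
    (A : Set (α × β)) : Prop :=
  ∀ B, MeasurableSet B → μ (A ∩ Prod.snd ⁻¹' B) ≤ L.liminf fun i ↦ μs i (A ∩ Prod.snd ⁻¹' B)

theorem integral_fst_restrict_snd_preimage (μ : Measure (α × β)) {f : α → ℝ} (hf : Measurable f)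
    {B : Set β} (hB : MeasurableSet B) :
    ∫ x, f x ∂(μ.restrict (Prod.snd ⁻¹' B)).fst =
      ∫ q, f q.1 * B.indicator (fun _ ↦ (1 : ℝ)) q.2 ∂μ := by
  rw [Measure.fst, integral_map measurable_fst.aemeasurable hf.aestronglyMeasurable,
    ← integral_indicator (measurable_snd hB)]
  congr 1 with q
  by_cases hq : q.2 ∈ B <;> simp [hq]

variable {μs : ι → Measure (α × β)} {μ : Measure (α × β)}

theorem TendstoFstRestrictSnd.leLiminfOnStrips_fst_preimage [TopologicalSpace α]
    [OpensMeasurableSpace α] [HasOuterApproxClosed α] [IsFiniteMeasure μ]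
    [∀ i, IsFiniteMeasure (μs i)] (h : TendstoFstRestrictSnd L μs μ) {U : Set α}
    (hU : IsOpen U) : LeLiminfOnStrips L μs μ (Prod.fst ⁻¹' U) := by
  intro B hB
  have := le_liminf_measure_open_of_forall_integral_tendsto (h B hB) hU
  simpa only [Measure.fst_apply hU.measurableSet,
    Measure.restrict_apply (measurable_fst hU.measurableSet)] using this

-- The strip `snd⁻¹ B` is cut along `V`: over `B ∩ V` the rectangle `U ×ˢ V` looks like `fst⁻¹ U`.
theorem LeLiminfOnStrips.union_prod {A : Set (α × β)} {U : Set α} {V : Set β}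
    (hA : MeasurableSet A) (hV : MeasurableSet V) (h : LeLiminfOnStrips L μs μ A)
    (hAU : LeLiminfOnStrips L μs μ (A ∪ Prod.fst ⁻¹' U)) :
    LeLiminfOnStrips L μs μ (A ∪ U ×ˢ V) := by
  intro B hB
  have hsplit : (A ∪ U ×ˢ V) ∩ Prod.snd ⁻¹' B =
      (A ∪ Prod.fst ⁻¹' U) ∩ Prod.snd ⁻¹' (B ∩ V) ∪ A ∩ Prod.snd ⁻¹' (B \ V) := by
    ext ⟨x, y⟩
    by_cases hy : y ∈ V <;> simp [hy]
  have hdisj : Disjoint ((A ∪ Prod.fst ⁻¹' U) ∩ Prod.snd ⁻¹' (B ∩ V))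
      (A ∩ Prod.snd ⁻¹' (B \ V)) :=
    Set.disjoint_left.2 fun q h₁ h₂ ↦ h₂.2.2 h₁.2.2
  have hmeas : MeasurableSet (A ∩ Prod.snd ⁻¹' (B \ V)) := hA.inter (measurable_snd (hB.diff hV))
  simp only [hsplit, measure_union hdisj hmeas]
  exact (add_le_add (hAU _ (hB.inter hV)) (h _ (hB.diff hV))).trans ENNReal.le_liminf_add

theorem TendstoFstRestrictSnd.leLiminfOnStrips_biUnion_union [TopologicalSpace α]
    [OpensMeasurableSpace α] [HasOuterApproxClosed α] [IsFiniteMeasure μ]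
    [∀ i, IsFiniteMeasure (μs i)] (h : TendstoFstRestrictSnd L μs μ) {T : Finset (Set (α × β))}
    (hT : ∀ t ∈ T, ∃ U V, IsOpen U ∧ MeasurableSet V ∧ t = U ×ˢ V) {U : Set α} (hU : IsOpen U) :
    LeLiminfOnStrips L μs μ ((⋃ t ∈ T, t) ∪ Prod.fst ⁻¹' U) := by
  classical
  induction T using Finset.induction_on generalizing U with
  | empty => simpa using h.leLiminfOnStrips_fst_preimage hU
  | insert t T _ ih =>
    obtain ⟨U', V', hU', hV', rfl⟩ := hT t (Finset.mem_insert_self t T)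
    have hT' : ∀ t ∈ T, ∃ U V, IsOpen U ∧ MeasurableSet V ∧ t = U ×ˢ V :=
      fun t ht ↦ hT t (Finset.mem_insert_of_mem ht)
    have hmeas : MeasurableSet ((⋃ t ∈ T, t) ∪ Prod.fst ⁻¹' U) := by
      refine (Finset.measurableSet_biUnion T fun t ht ↦ ?_).union (measurable_fst hU.measurableSet)
      obtain ⟨U, V, hU, hV, rfl⟩ := hT' t ht
      exact hU.measurableSet.prod hV
    rw [Finset.set_biUnion_insert, Set.union_comm (U' ×ˢ V'), Set.union_right_comm]
    refine (ih hT' hU).union_prod hmeas hV' ?_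
    simpa only [Set.union_assoc, ← Set.preimage_union] using ih hT' (hU.union hU')

theorem TendstoFstRestrictSnd.le_liminf_measure_open [TopologicalSpace α]
    [OpensMeasurableSpace α] [HasOuterApproxClosed α] [SecondCountableTopology α]
    [TopologicalSpace β] [OpensMeasurableSpace β] [SecondCountableTopology β]
    [IsProbabilityMeasure μ] [∀ i, IsFiniteMeasure (μs i)] (h : TendstoFstRestrictSnd L μs μ)
    {G : Set (α × β)} (hG : IsOpen G) :
    μ G ≤ L.liminf fun i ↦ μs i G := by
  let S : Set (Set (α × β)) := {t | ∃ U V, IsOpen U ∧ IsOpen V ∧ t = U ×ˢ V}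
  have hS : ∀ u, IsOpen u → ∀ x ∈ u, ∃ s ∈ S, s ∈ 𝓝 x ∧ s ⊆ u := by
    intro u hu x hx
    obtain ⟨U, V, hU, hV, hxU, hxV, hUV⟩ := isOpen_prod_iff.1 hu x.1 x.2 hx
    exact ⟨U ×ˢ V, ⟨U, V, hU, hV, rfl⟩, (hU.prod hV).mem_nhds ⟨hxU, hxV⟩, hUV⟩
  let ν : ProbabilityMeasure (α × β) := ⟨μ, inferInstance⟩
  have hνμ (s : Set (α × β)) : ((ν s : NNReal) : ENNReal) = μ s :=
    ν.ennreal_coeFn_eq_coeFn_toMeasure s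
  refine (le_liminf_iff).2 fun r hr ↦ ?_
  lift r to NNReal using (hr.trans_le prob_le_one).ne_top
  obtain ⟨T, hT, hrT, hTG⟩ := ν.exists_lt_measure_biUnion_of_isOpen hS hG
    (r := r) (by rwa [← ENNReal.coe_lt_coe, hνμ])
  rw [← ENNReal.coe_lt_coe, hνμ] at hrT
  have hT' : ∀ t ∈ T, ∃ U V, IsOpen U ∧ MeasurableSet V ∧ t = U ×ˢ V := fun t ht ↦ by
    obtain ⟨U, V, hU, hV, rfl⟩ := hT t ht
    exact ⟨U, V, hU, hV.measurableSet, rfl⟩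
  have hlim := h.leLiminfOnStrips_biUnion_union hT' isOpen_empty Set.univ MeasurableSet.univ
  simp only [Set.preimage_empty, Set.union_empty, Set.preimage_univ, Set.inter_univ] at hlim
  filter_upwards [eventually_lt_of_lt_liminf (hrT.trans_le hlim)] with i hi
  exact hi.trans_le (measure_mono hTG)

end Strips

end MeasureTheory

theorem semi_uniform_feller_implies_weakly_continuous_general
    (S₁ S₂ S₃ : Type*)
    [MetricSpace S₁] [MeasurableSpace S₁] [BorelSpace S₁] [TopologicalSpace.SeparableSpace S₁]
    [MetricSpace S₂] [MeasurableSpace S₂] [BorelSpace S₂] [TopologicalSpace.SeparableSpace S₂]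
    [MetricSpace S₃] [MeasurableSpace S₃]
    (Ψ : Kernel S₃ (S₁ × S₂)) [IsMarkovKernel Ψ]
    (hsuf : ∀ (s : ℕ → S₃) (s₃ : S₃), Tendsto s atTop (nhds s₃) →
      ∀ f : BoundedContinuousFunction S₁ ℝ, ∀ ε > (0 : ℝ), ∃ N : ℕ, ∀ n ≥ N,
        ∀ B : Set S₂, MeasurableSet B →
          |(∫ q, f q.1 * B.indicator (fun _ => (1 : ℝ)) q.2 ∂(Ψ (s n)))
            - (∫ q, f q.1 * B.indicator (fun _ => (1 : ℝ)) q.2 ∂(Ψ s₃))| < ε) :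
    ∀ (s : ℕ → S₃) (s₃ : S₃), Tendsto s atTop (nhds s₃) →
      ∀ g : BoundedContinuousFunction (S₁ × S₂) ℝ,
        Tendsto (fun n => ∫ q, g q ∂(Ψ (s n))) atTop
          (nhds (∫ q, g q ∂(Ψ s₃))) := by
  intro s s₃ hs g
  have hfst : TendstoFstRestrictSnd atTop (fun n ↦ Ψ (s n)) (Ψ s₃) := by
    intro B hB f
    simp only [integral_fst_restrict_snd_preimage _ f.continuous.measurable hB]
    refine Metric.tendsto_atTop.2 fun ε hε ↦ ?_
    obtain ⟨N, hN⟩ := hsuf s s₃ hs f ε hε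
    exact ⟨N, fun n hn ↦ hN n hn B hB⟩
  refine BoundedContinuousFunction.tendsto_integral_of_forall_integral_le_liminf_integral
    (fun f hf ↦ ?_) g
  exact integral_le_liminf_integral_of_forall_isOpen_measure_le_liminf_measure hf
    fun G hG ↦ hfst.le_liminf_measure_open hG

/-- A semi-uniform Feller transition probability is weakly continuous: if for every
convergent sequence `s₃ⁿ → s₃` and every bounded continuous `f` on `S₁` the integrals
`∫ f(s₁) Ψ(ds₁, B | s₃ⁿ)` converge uniformly in the Borel set `B ⊆ S₂`, then for every
bounded continuous `g` on `S₁ × S₂`, `∫ g dΨ(·|s₃ⁿ) → ∫ g dΨ(·|s₃)`. -/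
theorem semi_uniform_feller_implies_weakly_continuous
    (S₁ S₂ S₃ : Type*)
    [MetricSpace S₁] [MeasurableSpace S₁] [BorelSpace S₁] [TopologicalSpace.SeparableSpace S₁]
    [MetricSpace S₂] [MeasurableSpace S₂] [BorelSpace S₂] [TopologicalSpace.SeparableSpace S₂]
    [MetricSpace S₃] [MeasurableSpace S₃] [BorelSpace S₃]
    (Ψ : Kernel S₃ (S₁ × S₂)) [IsMarkovKernel Ψ]
    (hsuf : ∀ (s : ℕ → S₃) (s₃ : S₃), Tendsto s atTop (nhds s₃) →
      ∀ f : BoundedContinuousFunction S₁ ℝ, ∀ ε > (0 : ℝ), ∃ N : ℕ, ∀ n ≥ N,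
        ∀ B : Set S₂, MeasurableSet B →
          |(∫ q, f q.1 * B.indicator (fun _ => (1 : ℝ)) q.2 ∂(Ψ (s n)))
            - (∫ q, f q.1 * B.indicator (fun _ => (1 : ℝ)) q.2 ∂(Ψ s₃))| < ε) :
    ∀ (s : ℕ → S₃) (s₃ : S₃), Tendsto s atTop (nhds s₃) →
      ∀ g : BoundedContinuousFunction (S₁ × S₂) ℝ,
        Tendsto (fun n => ∫ q, g q ∂(Ψ (s n))) atTop
          (nhds (∫ q, g q ∂(Ψ s₃))) :=
  semi_uniform_feller_implies_weakly_continuous_general S₁ S₂ S₃ Ψ hsuf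
end
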